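/- The relation ≺* on triples (d, R, {d_{p,u}}_{p∈R, u∈ℕ}) is transitive. -/

import Mathlib

/-! The witness for the composite is the composite map `g ∘ f`. Where `g ∘ f` identifies two
indices or sends one to `⊤`, already `f` or `g` does so, and the proper descent in that step
survives composition with the non-strict descent in the other. -/

universe u

/-- A triple `(d, R, {d_{p,u}}_{p ∈ R, u ∈ ℕ})`: a derivation `d`, an index set `R`,
and a family of derivations indexed by `R × ℕ`.  Derivations are modelled abstractly
as the elements of a type `D` equipped with a transitive, well-founded "proper
subderivation" (proper subtree) relation `lt`. -/
structure TripleIdx (D : Type u) : Type (u + 1) where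
  d : D
  R : Type u
  fam : R → ℕ → D

namespace TripleIdx

variable {D : Type u}

/-- The family extended over `R ∪ {⊤}` (with `⊤` encoded as `none`), where
`d_{⊤,u} = d` for all `u`. -/
def famT (T : TripleIdx D) : Option T.R → ℕ → D
  | none => fun _ => T.d
  | some p => T.fam p

/-- `x` is a subderivation (subtree) of `y`: the reflexive closure of the proper
subderivation relation `lt`. -/
def SubD (lt : D → D → Prop) (x y : D) : Prop := lt x y ∨ x = y

/-- The relation `≺*` on triples: `(d', R', {d'_{p,u}}) ≺* (d, R, {d_{p,u}})` iff there
is a function `f : R' ∪ {⊤} → R ∪ {⊤}` such that each `d'_{p',u}` is a subderivation of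
`d_{f(p'),u}`, and a **proper** subderivation whenever `f⁻¹(f(p'))` is not a singleton
or `f(p') = ⊤`. -/
def PrecStar (lt : D → D → Prop) (T' T : TripleIdx D) : Prop :=
  ∃ f : Option T'.R → Option T.R,
    (∀ p' u, SubD lt (T'.famT p' u) (T.famT (f p') u)) ∧
    (∀ p', (f p' = none ∨ ¬ ∀ q', f q' = f p' → q' = p') →
      ∀ u, lt (T'.famT p' u) (T.famT (f p') u))

theorem SubD.trans {lt : D → D → Prop} (htrans : Transitive lt) {a b c : D}
    (hab : SubD lt a b) (hbc : SubD lt b c) : SubD lt a c := by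
  rcases hab with hab | rfl
  · rcases hbc with hbc | rfl
    · exact .inl (htrans hab hbc)
    · exact .inl hab
  · exact hbc

theorem lt_of_lt_of_subD {lt : D → D → Prop} (htrans : Transitive lt) {a b c : D}
    (hab : lt a b) (hbc : SubD lt b c) : lt a c := by
  rcases hbc with hbc | rfl
  · exact htrans hab hbc
  · exact hab

theorem lt_of_subD_of_lt {lt : D → D → Prop} (htrans : Transitive lt) {a b c : D}
    (hab : SubD lt a b) (hbc : lt b c) : lt a c := by
  rcases hab with hab | rfl
  · exact htrans hab hbc
  · exact hbc

/-- The condition under which `PrecStar` demands a proper subderivation at `p`. -/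
def Collapses {α β : Type*} (f : Option α → Option β) (p : Option α) : Prop :=
  f p = none ∨ ¬ ∀ q, f q = f p → q = p

theorem Collapses.of_comp {α β γ : Type*} {f : Option α → Option β} {g : Option β → Option γ}
    {p : Option α} (h : Collapses (g ∘ f) p) : Collapses f p ∨ Collapses g (f p) := by
  rcases h with hnone | hnotInj
  · by_cases hf : f p = none
    · exact .inl (.inl hf)
    · exact .inr (.inl hnone)
  · push Not at hnotInj
    obtain ⟨q, hgfq, hqp⟩ := hnotInj
    by_cases hfq : f q = f p
    · exact .inl (.inr fun hinj => hqp (hinj q hfq))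
    · exact .inr (.inr fun hinj => hfq (hinj (f q) hgfq))

/-- The relation `≺*` on triples `(d, R, {d_{p,u}})` is transitive. -/
theorem precStar_trans (lt : D → D → Prop) (htrans : Transitive lt) :
    Transitive (PrecStar lt) := by
  rintro A B C ⟨f, hf, hf'⟩ ⟨g, hg, hg'⟩
  refine ⟨g ∘ f, fun p u => (hf p u).trans htrans (hg (f p) u), fun p hp u => ?_⟩
  rcases Collapses.of_comp hp with hfp | hgfp
  · exact lt_of_lt_of_subD htrans (hf' p hfp u) (hg (f p) u)
  · exact lt_of_subD_of_lt htrans (hf p u) (hg' (f p) hgfp u)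

end TripleIdx
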